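/- arXiv:2511.16358 — 4 statements merged into one kernel-verified Lean document; each statement's English description precedes it below -/
import Mathlib

section
/- Proposition 1, entrywise form (mode-k cherry sub-network factorization of the iFCTN contraction). Let X be the iFCTN contraction of cherry factors (G_{k,j})_{k≠j} and fix k ∈ {1,…,N}. For each multi-index (i_j)_{j≠k} with i_j ∈ {1,…,I_j}, define S_k((i_j)_{j≠k}) = ∏_{p<q, p≠k, q≠k} (G_{p,q}ᵀ G_{q,p})_{i_p, i_q}. Then for all i₁ ∈ {1,…,I₁}, …, i_N ∈ {1,…,I_N}: X(i₁,…,i_N) = Σ over all tuples (r_j)_{j≠k} with r_j ∈ {1,…,R_{k,j}} of S_k((i_j)_{j≠k}) · ∏_{j≠k} G_{j,k}(r_j, i_j) · G_{k,j}(r_j, i_k). -/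
/-- The ordered pairs `(p, q)` with `p < q`. -/
abbrev iFCTNPairs (N : ℕ) : Type :=
  {pq : Fin N × Fin N // pq.1 < pq.2}

/-- The ordered pairs `(p, q)` with `p < q` that avoid the index `k`. -/
abbrev iFCTNPairsAvoiding (N : ℕ) (k : Fin N) : Type :=
  {pq : Fin N × Fin N // pq.1 < pq.2 ∧ pq.1 ≠ k ∧ pq.2 ≠ k}

/-- Splitting the pairs into those avoiding `k` and those containing `k`. -/
def iFCTNModeKEquiv (N : ℕ) (k : Fin N) :
    iFCTNPairsAvoiding N k ⊕ {j : Fin N // j ≠ k} ≃ iFCTNPairs N where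
  toFun x :=
    match x with
    | Sum.inl ⟨pq, h⟩ => ⟨pq, h.1⟩
    | Sum.inr ⟨j, hj⟩ =>
      if h : j < k then ⟨(j, k), h⟩
      else ⟨(k, j), lt_of_le_of_ne (not_lt.mp h) (Ne.symm hj)⟩
  invFun pq :=
    if hp : pq.1.1 = k then
      Sum.inr ⟨pq.1.2, by
        intro hqk
        exact absurd pq.2 (by rw [hp, hqk]; exact lt_irrefl k)⟩
    else if hq : pq.1.2 = k then Sum.inr ⟨pq.1.1, hp⟩
    else Sum.inl ⟨pq.1, ⟨pq.2, hp, hq⟩⟩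
  left_inv := by
    rintro (⟨⟨p, q⟩, h, hp, hq⟩ | ⟨j, hj⟩)
    · simp [hp, hq]
    · by_cases h : j < k
      · simp [h, Ne.symm (ne_of_lt h), hj]
      · simp [h, hj]
  right_inv := by
    rintro ⟨⟨p, q⟩, h⟩
    by_cases hp : p = k
    · subst hp
      simp [not_lt.mpr (le_of_lt h)]
    · by_cases hq : q = k
      · subst hq
        simp [hp, h]
      · simp [hp, hq]

/-- Proposition 1, entrywise form: the iFCTN contraction factors through the mode-k
cherry sub-network, i.e. X(i₁,…,i_N) = Σ_{(r_j)_{j≠k}} S_k((i_j)_{j≠k}) ·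
∏_{j≠k} G_{j,k}(r_j, i_j) · G_{k,j}(r_j, i_k). -/
theorem iFCTN_mode_k_entrywise
    (N : ℕ) (hN : 2 ≤ N)
    (I : Fin N → ℕ+) (R : Fin N → Fin N → ℕ+)
    (hR : ∀ p q : Fin N, R p q = R q p)
    (G : ∀ k j : Fin N, Matrix (Fin (R k j)) (Fin (I k)) ℝ)
    (X : ((n : Fin N) → Fin (I n)) → ℝ)
    (hX : ∀ i : (n : Fin N) → Fin (I n),
      X i =
        ∑ r : (pq : iFCTNPairs N) → Fin (R pq.1.1 pq.1.2),
          ∏ pq : iFCTNPairs N,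
            G pq.1.1 pq.1.2 (r pq) (i pq.1.1) *
            G pq.1.2 pq.1.1
              (Fin.cast (congrArg (fun t : ℕ+ => (t : ℕ)) (hR pq.1.1 pq.1.2)) (r pq))
              (i pq.1.2))
    (k : Fin N) :
    ∀ i : (n : Fin N) → Fin (I n),
      X i =
        ∑ rr : (j : {j : Fin N // j ≠ k}) → Fin (R k j.1),
          (∏ pq : iFCTNPairsAvoiding N k,
            ∑ t : Fin (R pq.1.1 pq.1.2),
              G pq.1.1 pq.1.2 t (i pq.1.1) *
              G pq.1.2 pq.1.1
                (Fin.cast (congrArg (fun t : ℕ+ => (t : ℕ)) (hR pq.1.1 pq.1.2)) t)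
                (i pq.1.2)) *
          ∏ j : {j : Fin N // j ≠ k},
            G j.1 k (Fin.cast (congrArg (fun t : ℕ+ => (t : ℕ)) (hR k j.1)) (rr j)) (i j.1) *
            G k j.1 (rr j) (i k) := by
  intro i
  -- sum-of-products = product-of-sums, on both sides
  have key : ∀ (ι : Type) [Fintype ι] [DecidableEq ι] (n : ι → ℕ) (f : (x : ι) → Fin (n x) → ℝ),
      (∑ r : (x : ι) → Fin (n x), ∏ x : ι, f x (r x)) = ∏ x : ι, ∑ t : Fin (n x), f x t := by
    intro ι _ _ n f
    rw [Finset.prod_univ_sum (fun x => (Finset.univ : Finset (Fin (n x)))) f]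
    rw [Fintype.piFinset_univ]
  rw [hX i,
    key (iFCTNPairs N) (fun pq => ((R pq.1.1 pq.1.2 : ℕ+) : ℕ))
      (fun pq t => G pq.1.1 pq.1.2 t (i pq.1.1) *
        G pq.1.2 pq.1.1
          (Fin.cast (congrArg (fun t : ℕ+ => (t : ℕ)) (hR pq.1.1 pq.1.2)) t) (i pq.1.2)),
    ← Finset.mul_sum,
    key {j : Fin N // j ≠ k} (fun j => ((R k j.1 : ℕ+) : ℕ))
      (fun j t => G j.1 k (Fin.cast (congrArg (fun t : ℕ+ => (t : ℕ)) (hR k j.1)) t) (i j.1) *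
        G k j.1 t (i k))]
  rw [← Equiv.prod_comp (iFCTNModeKEquiv N k), Fintype.prod_sum_type]
  congr 1
  refine Fintype.prod_congr _ _ fun j => ?_
  obtain ⟨j, hj⟩ := j
  generalize hpair : (iFCTNModeKEquiv N k) (Sum.inr ⟨j, hj⟩) = pq
  by_cases h : j < k
  · simp only [iFCTNModeKEquiv, Equiv.coe_fn_mk, dif_pos h] at hpair
    subst hpair
    exact Fintype.sum_equiv (finCongr (congrArg (fun t : ℕ+ => (t : ℕ)) (hR j k)))
      _ _ fun t => rfl
  · simp only [iFCTNModeKEquiv, Equiv.coe_fn_mk, dif_neg h] at hpair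
    subst hpair
    exact Fintype.sum_congr _ _ fun t => mul_comm _ _
end

section
/- Proposition 1, sub-network form: the mode-k cherry sub-network equals a diagonal matrix times a Kronecker product. Fix k ∈ {1,…,N}. Define the mode-k cherry sub-network Z_k as the matrix with rows indexed by multi-indices (i_j)_{j≠k} (i_j ∈ {1,…,I_j}) and columns indexed by multi-indices (r_j)_{j≠k} (r_j ∈ {1,…,R_{k,j}}), obtained by contracting the remaining N−1 factor strings over all their mutual rank indices: Z_k((i_j)_{j≠k}, (r_j)_{j≠k}) = Σ over all r_{p,q} ∈ {1,…,R_{p,q}} with p < q, p ≠ k, q ≠ k of [∏_{p<q, p≠k, q≠k} G_{p,q}(r_{p,q}, i_p) · G_{q,p}(r_{p,q}, i_q)] · ∏_{j≠k} G_{j,k}(r_j, i_j). Then Z_k((i_j)_{j≠k}, (r_j)_{j≠k}) = S_k((i_j)_{j≠k}) · ∏_{j≠k} G_{j,k}(r_j, i_j) for all indices, where S_k((i_j)_{j≠k}) = ∏_{p<q, p≠k, q≠k} (G_{p,q}ᵀ G_{q,p})_{i_p, i_q}; that is, Z_k = diag(vec(S_k)) times the Kronecker product over j ≠ k of the matrices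 G_{j,k}ᵀ. -/
/-- Proposition 1, sub-network form: the mode-k cherry sub-network, obtained by
contracting the remaining N−1 factor strings over all their mutual rank indices,
equals diag(vec(S_k)) times the Kronecker product of the matrices G_{j,k}ᵀ (j ≠ k);
entrywise, Z_k((i_j)_{j≠k}, (r_j)_{j≠k}) = S_k((i_j)_{j≠k}) · ∏_{j≠k} G_{j,k}(r_j, i_j). -/
theorem iFCTN_cherry_subnetwork
    (N : ℕ) (hN : 2 ≤ N)
    (I : Fin N → ℕ+) (R : Fin N → Fin N → ℕ+)
    (hR : ∀ p q : Fin N, R p q = R q p)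
    (G : ∀ k j : Fin N, Matrix (Fin (R k j)) (Fin (I k)) ℝ)
    (k : Fin N) :
    ∀ (ii : (j : {j : Fin N // j ≠ k}) → Fin (I j.1))
      (rr : (j : {j : Fin N // j ≠ k}) → Fin (R k j.1)),
      (∑ s : (pq : iFCTNPairsAvoiding N k) → Fin (R pq.1.1 pq.1.2),
        (∏ pq : iFCTNPairsAvoiding N k,
          G pq.1.1 pq.1.2 (s pq) (ii ⟨pq.1.1, pq.2.2.1⟩) *
          G pq.1.2 pq.1.1
            (Fin.cast (congrArg (fun t : ℕ+ => (t : ℕ)) (hR pq.1.1 pq.1.2)) (s pq))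
            (ii ⟨pq.1.2, pq.2.2.2⟩)) *
        ∏ j : {j : Fin N // j ≠ k},
          G j.1 k (Fin.cast (congrArg (fun t : ℕ+ => (t : ℕ)) (hR k j.1)) (rr j)) (ii j))
      =
      (∏ pq : iFCTNPairsAvoiding N k,
        ∑ t : Fin (R pq.1.1 pq.1.2),
          G pq.1.1 pq.1.2 t (ii ⟨pq.1.1, pq.2.2.1⟩) *
          G pq.1.2 pq.1.1
            (Fin.cast (congrArg (fun t : ℕ+ => (t : ℕ)) (hR pq.1.1 pq.1.2)) t)
            (ii ⟨pq.1.2, pq.2.2.2⟩)) *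
      ∏ j : {j : Fin N // j ≠ k},
        G j.1 k (Fin.cast (congrArg (fun t : ℕ+ => (t : ℕ)) (hR k j.1)) (rr j)) (ii j) := by
  intro ii rr
  rw [← Finset.sum_mul, Finset.prod_univ_sum, Fintype.piFinset_univ]
end

section
/- Proposition 1, unfolding form. Fix k ∈ {1,…,N} and let X be the iFCTN contraction of cherry factors (G_{k,j})_{k≠j}. Let G_(k)ᵀ denote the matrix with rows indexed by multi-indices (r_j)_{j≠k} (r_j ∈ {1,…,R_{k,j}}) and columns indexed by i_k ∈ {1,…,I_k}, with entries G_(k)ᵀ((r_j)_{j≠k}, i_k) = ∏_{j≠k} G_{k,j}(r_j, i_k), and let Z_k be the matrix with entries Z_k((i_j)_{j≠k}, (r_j)_{j≠k}) = [∏_{p<q, p≠k, q≠k} (G_{p,q}ᵀ G_{q,p})_{i_p, i_q}] · ∏_{j≠k} G_{j,k}(r_j, i_j). Then the transposed mode-k unfolding of X factors as X_(k)ᵀ = Z_k · G_(k)ᵀ; that is, for all multi-indices (i_j)_{j≠k} and all i_k: X(i₁,…,i_N) = Σ over (r_j)_{j≠k} of Z_k((i_j)_{j≠k}, (r_j)_{j≠k})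 · G_(k)ᵀ((r_j)_{j≠k}, i_k). -/
/-!
Each bond `(p, q)` carries its own summation index `r_{p,q}`, so at fixed `i` the contraction
is the product over all bonds of the bond sums `(G_{p,q}ᵀ G_{q,p})_{i_p, i_q}`. The bonds split
into those avoiding `k`, whose product is the first factor of `Z_k`, and the bonds `{j, k}`
for `j ≠ k`; expanding the product of the latter bond sums back into a single sum over
`(r_j)_{j ≠ k}` gives `Z_k G_(k)ᵀ`.
-/

namespace iFCTNPairs

variable {N : ℕ}

def incident (k : Fin N) (j : {j : Fin N // j ≠ k}) : iFCTNPairs N :=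
  if h : j.1 < k then ⟨(j.1, k), h⟩
  else ⟨(k, j.1), lt_of_le_of_ne (not_lt.mp h) (Ne.symm j.2)⟩

def avoidingSumIncidentEquiv (k : Fin N) :
    iFCTNPairsAvoiding N k ⊕ {j : Fin N // j ≠ k} ≃ iFCTNPairs N where
  toFun := Sum.elim (fun a => ⟨a.1, a.2.1⟩) (incident k)
  invFun pq :=
    if h1 : pq.1.1 = k then .inr ⟨pq.1.2, (show k < pq.1.2 from h1 ▸ pq.2).ne'⟩
    else if h2 : pq.1.2 = k then .inr ⟨pq.1.1, h1⟩
    else .inl ⟨pq.1, pq.2, h1, h2⟩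
  left_inv := by
    rintro (⟨⟨p, q⟩, h, h1, h2⟩ | ⟨j, hj⟩)
    · simp [h1, h2]
    · by_cases h : j < k
      · simp [incident, h, hj]
      · simp [incident, h]
  right_inv := by
    rintro ⟨⟨p, q⟩, h⟩
    by_cases h1 : p = k
    · subst h1
      simp [incident, not_lt.mpr h.le]
    · by_cases h2 : q = k
      · subst h2
        simp [incident, h1, h]
      · simp [h1, h2]

end iFCTNPairs

section Bond

variable {N : ℕ} {I : Fin N → ℕ+} {R : Fin N → Fin N → ℕ+}
  (hR : ∀ p q : Fin N, R p q = R q p) (G : ∀ k j : Fin N, Matrix (Fin (R k j)) (Fin (I k)) ℝ)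

/-- The matrix `G_{p,q}ᵀ G_{q,p}`, the rows of `G_{q,p}` being indexed through
`R q p = R p q`. -/
def bondMatrix (p q : Fin N) : Matrix (Fin (I p)) (Fin (I q)) ℝ :=
  fun a b => ∑ t : Fin (R p q),
    G p q t a * G q p (Fin.cast (congrArg (fun t : ℕ+ => (t : ℕ)) (hR p q)) t) b

theorem bondMatrix_transpose (p q : Fin N) :
    (bondMatrix hR G p q).transpose = bondMatrix hR G q p := by
  ext a b
  refine Fintype.sum_equiv (finCongr (congrArg (fun t : ℕ+ => (t : ℕ)) (hR p q))) _ _ fun t => ?_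
  simp [Fin.cast_cast, mul_comm]

theorem bondMatrix_incident (i : (n : Fin N) → Fin (I n)) (k : Fin N) (j : {j : Fin N // j ≠ k}) :
    bondMatrix hR G (iFCTNPairs.incident k j).1.1 (iFCTNPairs.incident k j).1.2
        (i (iFCTNPairs.incident k j).1.1) (i (iFCTNPairs.incident k j).1.2) =
      bondMatrix hR G k j (i k) (i j) := by
  by_cases h : j.1 < k
  · rw [show iFCTNPairs.incident k j = ⟨(j.1, k), h⟩ from dif_pos h, ← bondMatrix_transpose]
    rfl
  · rw [show iFCTNPairs.incident k j = ⟨(k, j.1), _⟩ from dif_neg h]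

end Bond

theorem iFCTN_mode_k_unfolding_general
    (N : ℕ)
    (I : Fin N → ℕ+) (R : Fin N → Fin N → ℕ+)
    (hR : ∀ p q : Fin N, R p q = R q p)
    (G : ∀ k j : Fin N, Matrix (Fin (R k j)) (Fin (I k)) ℝ)
    (X : ((n : Fin N) → Fin (I n)) → ℝ)
    (hX : ∀ i : (n : Fin N) → Fin (I n),
      X i =
        ∑ r : (pq : iFCTNPairs N) → Fin (R pq.1.1 pq.1.2),
          ∏ pq : iFCTNPairs N,
            G pq.1.1 pq.1.2 (r pq) (i pq.1.1) *
            G pq.1.2 pq.1.1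
              (Fin.cast (congrArg (fun t : ℕ+ => (t : ℕ)) (hR pq.1.1 pq.1.2)) (r pq))
              (i pq.1.2))
    (k : Fin N) :
    ∀ i : (n : Fin N) → Fin (I n),
      X i =
        ∑ rr : (j : {j : Fin N // j ≠ k}) → Fin (R k j.1),
          ((∏ pq : iFCTNPairsAvoiding N k,
            ∑ t : Fin (R pq.1.1 pq.1.2),
              G pq.1.1 pq.1.2 t (i pq.1.1) *
              G pq.1.2 pq.1.1
                (Fin.cast (congrArg (fun t : ℕ+ => (t : ℕ)) (hR pq.1.1 pq.1.2)) t)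
                (i pq.1.2)) *
          ∏ j : {j : Fin N // j ≠ k},
            G j.1 k (Fin.cast (congrArg (fun t : ℕ+ => (t : ℕ)) (hR k j.1)) (rr j)) (i j.1)) *
          ∏ j : {j : Fin N // j ≠ k},
            G k j.1 (rr j) (i k) := by
  intro i
  calc X i = ∏ pq : iFCTNPairs N, bondMatrix hR G pq.1.1 pq.1.2 (i pq.1.1) (i pq.1.2) := by
        simp only [hX i, bondMatrix, Fintype.prod_sum]
    _ = (∏ pq : iFCTNPairsAvoiding N k, bondMatrix hR G pq.1.1 pq.1.2 (i pq.1.1) (i pq.1.2)) *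
          ∏ j : {j : Fin N // j ≠ k}, bondMatrix hR G k j (i k) (i j) := by
        rw [← Fintype.prod_equiv (iFCTNPairs.avoidingSumIncidentEquiv k) _ _ fun _ => rfl,
          Fintype.prod_sum_type]
        simp only [iFCTNPairs.avoidingSumIncidentEquiv, Equiv.coe_fn_mk, Sum.elim_inl,
          Sum.elim_inr, bondMatrix_incident]
    _ = _ := by
        simp only [mul_assoc, ← Finset.prod_mul_distrib, ← Finset.mul_sum]
        congr 1
        simp only [bondMatrix, Fintype.prod_sum]
        exact Finset.sum_congr rfl fun _ _ => Finset.prod_congr rfl fun _ _ => mul_comm _ _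

/-- Proposition 1, unfolding form: the transposed mode-k unfolding of the iFCTN
contraction factors as X_(k)ᵀ = Z_k · G_(k)ᵀ, where Z_k is the mode-k cherry
sub-network and G_(k)ᵀ((r_j)_{j≠k}, i_k) = ∏_{j≠k} G_{k,j}(r_j, i_k). -/
theorem iFCTN_mode_k_unfolding
    (N : ℕ) (hN : 2 ≤ N)
    (I : Fin N → ℕ+) (R : Fin N → Fin N → ℕ+)
    (hR : ∀ p q : Fin N, R p q = R q p)
    (G : ∀ k j : Fin N, Matrix (Fin (R k j)) (Fin (I k)) ℝ)
    (X : ((n : Fin N) → Fin (I n)) → ℝ)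
    (hX : ∀ i : (n : Fin N) → Fin (I n),
      X i =
        ∑ r : (pq : iFCTNPairs N) → Fin (R pq.1.1 pq.1.2),
          ∏ pq : iFCTNPairs N,
            G pq.1.1 pq.1.2 (r pq) (i pq.1.1) *
            G pq.1.2 pq.1.1
              (Fin.cast (congrArg (fun t : ℕ+ => (t : ℕ)) (hR pq.1.1 pq.1.2)) (r pq))
              (i pq.1.2))
    (k : Fin N) :
    ∀ i : (n : Fin N) → Fin (I n),
      X i =
        ∑ rr : (j : {j : Fin N // j ≠ k}) → Fin (R k j.1),
          ((∏ pq : iFCTNPairsAvoiding N k,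
            ∑ t : Fin (R pq.1.1 pq.1.2),
              G pq.1.1 pq.1.2 t (i pq.1.1) *
              G pq.1.2 pq.1.1
                (Fin.cast (congrArg (fun t : ℕ+ => (t : ℕ)) (hR pq.1.1 pq.1.2)) t)
                (i pq.1.2)) *
          ∏ j : {j : Fin N // j ≠ k},
            G j.1 k (Fin.cast (congrArg (fun t : ℕ+ => (t : ℕ)) (hR k j.1)) (rr j)) (i j.1)) *
          ∏ j : {j : Fin N // j ≠ k},
            G k j.1 (rr j) (i k) :=
  iFCTN_mode_k_unfolding_general N I R hR G X hX k
end

section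
/- Lemma 3 (relative error bound for Gauss–Seidel proximal updates of a differentiable function with blockwise Lipschitz partial gradients). Let m ≥ 1 and let E₁,…,E_m be real inner product spaces, E = E₁ × ⋯ × E_m equipped with the product inner product. Let F : E → ℝ be differentiable, and for each j ∈ {1,…,m} let ∇_jF : E → E_j denote the j-th block component of the gradient of F. Assume each map ∇_jF is Lipschitz on E with constant L_j, where E carries the norm ‖x‖ = Σ_{j=1}^{m} ‖x_j‖ (or any equivalent product norm, with constants adjusted accordingly). Let ρ > 0 and suppose x = (x₁,…,x_m) and x' = (x'₁,…,x'_m) in E satisfy the stationarity conditions: for every j, ∇_jF(x'₁,…,x'_j, x_{j+1},…,x_m) + ρ·(x'_j − x_j) = 0. Then Σ_{j=1}^{m} ‖∇_jF(x')‖ ≤ (Σ_{j=1}^{m} L_j + m·ρ) · Σ_{j=1}^{m} ‖x'_j − x_j‖. -/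
/-- Lemma 3 (relative error bound for Gauss–Seidel proximal updates of a differentiable
function with blockwise Lipschitz partial gradients): if the blockwise stationarity
conditions ∇_jF(x'₁,…,x'_j, x_{j+1},…,x_m) + ρ(x'_j − x_j) = 0 hold, then
Σ_j ‖∇_jF(x')‖ ≤ (Σ_j L_j + mρ) Σ_j ‖x'_j − x_j‖. -/
theorem gauss_seidel_proximal_relative_error
    (m : ℕ) (hm : 1 ≤ m) (E : Fin m → Type*)
    [∀ j, NormedAddCommGroup (E j)] [∀ j, InnerProductSpace ℝ (E j)]
    [∀ j, CompleteSpace (E j)]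
    (F : (∀ j, E j) → ℝ) (hF : Differentiable ℝ F)
    (gradF : ∀ j : Fin m, (∀ i, E i) → E j)
    (hgrad : ∀ (j : Fin m) (y : ∀ i, E i),
      HasGradientAt (fun c : E j => F (Function.update y j c)) (gradF j y) (y j))
    (L : Fin m → ℝ)
    (hLip : ∀ (j : Fin m) (y z : ∀ i, E i),
      ‖gradF j y - gradF j z‖ ≤ L j * ∑ i, ‖y i - z i‖)
    (ρ : ℝ) (hρ : 0 < ρ) (x x' : ∀ i, E i)
    (hstat : ∀ j : Fin m,
      gradF j (fun i => if i ≤ j then x' i else x i) + ρ • (x' j - x j) = 0) :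
    ∑ j, ‖gradF j x'‖ ≤ (∑ j, L j + m * ρ) * ∑ j, ‖x' j - x j‖ := by

  set S := ∑ j, ‖x' j - x j‖ with hSdef
  have hS0 : 0 ≤ S := Finset.sum_nonneg fun i _ => norm_nonneg _
  have key : ∀ j : Fin m, ‖gradF j x'‖ ≤ L j * S + ρ * S := by
    intro j
    set y : ∀ i, E i := (fun i => if i ≤ j then x' i else x i) with hy
    have hterm : ∀ i, ‖x' i - y i‖ ≤ ‖x' i - x i‖ := by
      intro i
      by_cases h : i ≤ j <;> simp [hy, h]
    have hsum : ∑ i, ‖x' i - y i‖ ≤ S :=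
      Finset.sum_le_sum fun i _ => hterm i
    have hsum0 : 0 ≤ ∑ i, ‖x' i - y i‖ :=
      Finset.sum_nonneg fun i _ => norm_nonneg _
    have h1 : ‖gradF j x' - gradF j y‖ ≤ L j * ∑ i, ‖x' i - y i‖ := hLip j x' y
    have h2 : 0 ≤ L j * ∑ i, ‖x' i - y i‖ := le_trans (norm_nonneg _) h1
    have h3 : 0 ≤ L j * S := le_trans (norm_nonneg _) (by simpa using hLip j x' x)
    have hLS : L j * ∑ i, ‖x' i - y i‖ ≤ L j * S := by
      rcases le_or_gt 0 (L j) with h | h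
      · exact mul_le_mul_of_nonneg_left hsum h
      · have hz : ∑ i, ‖x' i - y i‖ = 0 := le_antisymm (nonpos_of_mul_nonneg_right h2 h) hsum0
        rw [hz, mul_zero]; exact h3
    have hyval : gradF j y = -(ρ • (x' j - x j)) :=
      eq_neg_of_add_eq_zero_left (hstat j)
    have hynorm : ‖gradF j y‖ ≤ ρ * S := by
      rw [hyval, norm_neg, norm_smul, Real.norm_eq_abs, abs_of_pos hρ]
      refine mul_le_mul_of_nonneg_left ?_ hρ.le
      exact Finset.single_le_sum (f := fun i => ‖x' i - x i‖) (fun i _ => norm_nonneg _) (Finset.mem_univ j)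
    calc ‖gradF j x'‖ = ‖(gradF j x' - gradF j y) + gradF j y‖ := by rw [sub_add_cancel]
      _ ≤ ‖gradF j x' - gradF j y‖ + ‖gradF j y‖ := norm_add_le _ _
      _ ≤ L j * S + ρ * S := add_le_add (le_trans h1 hLS) hynorm
  calc ∑ j, ‖gradF j x'‖ ≤ ∑ j : Fin m, (L j * S + ρ * S) :=
        Finset.sum_le_sum fun j _ => key j
    _ = (∑ j, L j + m * ρ) * S := by
        rw [Finset.sum_add_distrib, ← Finset.sum_mul, Finset.sum_const, Finset.card_univ,
          Fintype.card_fin, nsmul_eq_mul]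
        ring
end
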